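/- Let 1 ≤ p < ∞, k ≥ 1, and μ ∈ M^p. Let R_{k−1}^* denote the infimum of the (k−1)-point distortion R_{k−1,p} over Ω̄^{k−1} (with the convention R_0^* := Pers_p(μ)^{1/p}, the distortion of the empty codebook). Then for every 0 ≤ λ < R_{k−1}^*, the sublevel set {c ∈ Ω̄^k : R_{k,p}(c) ≤ λ} is compact. -/

import Mathlib

open MeasureTheory ENNReal Set

noncomputable section

abbrev E2 := EuclideanSpace ℝ (Fin 2)

/-- The open half-plane `Ω` above the diagonal. -/
def Omega : Set E2 := {x | x 0 < x 1}

/-- The diagonal `∂Ω`. -/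
def diagSet : Set E2 := {x | x 0 = x 1}

/-- `Ω̄ = Ω ∪ ∂Ω`. -/
def OmegaBar : Set E2 := Omega ∪ diagSet

/-- Euclidean distance of a point to the diagonal. -/
def dDiag (x : E2) : ℝ := Metric.infDist x diagSet

/-- Total persistence `Pers_p(μ) = ∫_Ω ‖x-∂Ω‖^p dμ(x)`. -/
def Pers (p : ℝ) (μ : Measure E2) : ℝ≥0∞ :=
  ∫⁻ x in Omega, ENNReal.ofReal (dDiag x ^ p) ∂μ

/-- Admissible partial transport plans: measures on `Ω̄ × Ω̄` whose first (resp. second)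
marginal coincides with `μ` (resp. `ν`) on `Ω`. -/
def Adm (μ ν : Measure E2) : Set (Measure (E2 × E2)) :=
  {π | (π.map Prod.fst).restrict Omega = μ.restrict Omega ∧
       (π.map Prod.snd).restrict Omega = ν.restrict Omega ∧
       π ((OmegaBar ×ˢ OmegaBar)ᶜ) = 0}

/-- `OT_p(μ,ν)^p`, the optimal partial transport cost. -/
def OTpow (p : ℝ) (μ ν : Measure E2) : ℝ≥0∞ :=
  ⨅ π ∈ Adm μ ν, ∫⁻ z, ENNReal.ofReal (dist z.1 z.2 ^ p) ∂π

/-- The distance `OT_p(μ,ν)`. -/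
def OTp (p : ℝ) (μ ν : Measure E2) : ℝ≥0∞ := (OTpow p μ ν) ^ (1/p)

/-- The closed ℓ¹-ball `A_L` of radius `L/√2` centered at `(-L/√8, L/√8)`. -/
def ballA (L : ℝ) : Set E2 :=
  {x | |x 0 + L / Real.sqrt 8| + |x 1 - L / Real.sqrt 8| ≤ L / Real.sqrt 2}

/-- Membership in `M^q_{L,M}`: supported in `Ω`, in `A_L`, with `Pers_q ≤ M`. -/
def MemMq (q L M : ℝ) (μ : Measure E2) : Prop :=
  μ Omegaᶜ = 0 ∧ μ (ballA L)ᶜ = 0 ∧ Pers q μ ≤ ENNReal.ofReal M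

/-- Empirical EPD `μ̄_n = (1/n)(μ₁ + ⋯ + μ_n)` of a sample of `n` persistence measures. -/
def empEPD (n : ℕ) (ω : Fin n → Measure E2) : Measure E2 :=
  (n : ℝ≥0∞)⁻¹ • ∑ i : Fin n, ω i

/-- Distance from `x` to the `j`-th centroid, the last index standing for the diagonal. -/
def cdistC (k : ℕ) (c : Fin k → E2) (j : Fin (k+1)) (x : E2) : ℝ :=
  if h : (j : ℕ) < k then dist x (c ⟨j, h⟩) else dDiag x

/-- Voronoi cells `V_j(c)` (the last cell being the diagonal cell `V_{k+1}`). -/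
def Vcell (k : ℕ) (c : Fin k → E2) (j : Fin (k+1)) : Set E2 :=
  {x ∈ Omega | (∀ j' : Fin (k+1), j' < j → cdistC k c j x ≤ cdistC k c j' x) ∧
               (∀ j' : Fin (k+1), j < j' → cdistC k c j x < cdistC k c j' x)}

/-- The distortion `R_{k,p}(c)`. -/
def distortion (p : ℝ) (μ : Measure E2) (k : ℕ) (c : Fin k → E2) : ℝ≥0∞ :=
  (∑ j : Fin (k+1), ∫⁻ x in Vcell k c j, ENNReal.ofReal (cdistC k c j x ^ p) ∂μ) ^ (1/p)

/-- The optimal distortion `R_k^* = inf {R_{k,p}(c) : c ∈ Ω̄^k}`. -/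
def Rstar (p : ℝ) (μ : Measure E2) (k : ℕ) : ℝ≥0∞ :=
  ⨅ (c : Fin k → E2) (_ : ∀ j, c j ∈ OmegaBar), distortion p μ k c

/-- The set `C_k` of optimal codebooks. -/
def Copt (p : ℝ) (μ : Measure E2) (k : ℕ) : Set (Fin k → E2) :=
  {c | (∀ j, c j ∈ OmegaBar) ∧ distortion p μ k c = Rstar p μ k}

/-- Support of a measure. -/
def msupport (μ : Measure E2) : Set E2 :=
  {x | ∀ U : Set E2, IsOpen U → x ∈ U → 0 < μ U}

/-- Euclidean distance between codebooks seen as vectors of `ℝ^{2k}`. -/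
def cbDist (k : ℕ) (c c' : Fin k → E2) : ℝ :=
  Real.sqrt (∑ j : Fin k, dist (c j) (c' j) ^ 2)

/-- Euclidean norm on `(ℝ²)^k`. -/
def pnorm2 (k : ℕ) (v : Fin k → E2) : ℝ := Real.sqrt (∑ j : Fin k, ‖v j‖ ^ 2)

/-- Distance between the `j`-th and `j'`-th centroids, the last index standing
for the diagonal. -/
def cdistPt (k : ℕ) (c : Fin k → E2) (j j' : Fin (k+1)) : ℝ :=
  if h : (j : ℕ) < k then
    (if h' : (j' : ℕ) < k then dist (c ⟨j, h⟩) (c ⟨j', h'⟩) else dDiag (c ⟨j, h⟩))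
  else (if h' : (j' : ℕ) < k then dDiag (c ⟨j', h'⟩) else 0)

/-- The set `N(c)` of points lying on a boundary between two Voronoi cells. -/
def Nset (k : ℕ) (c : Fin k → E2) : Set E2 :=
  {x ∈ Omega | ∃ j j' : Fin (k+1), j < j' ∧ x ∈ Vcell k c j ∧ cdistC k c j x = cdistC k c j' x}

/-- The `t`-neighborhood `A^t` of `A` in `Ω`. -/
def tN (A : Set E2) (t : ℝ) : Set E2 := {x ∈ Omega | ∃ a ∈ A, dist x a ≤ t}

/-- `w₂(c, m)_j = ∫_{V_j(c)} x dm(x)`. -/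
def w2 (k : ℕ) (c : Fin k → E2) (m : Measure E2) (j : Fin k) : E2 :=
  ∫ x in Vcell k c j.castSucc, x ∂m

/-- Absolute difference in `ℝ≥0∞`. -/
def eabs (a b : ℝ≥0∞) : ℝ≥0∞ := (a - b) + (b - a)

/-!
The Voronoi cells partition `Ω`, so `R_{k,p}(c)^p = ∫_Ω min_j ‖x - c_j‖^p dμ(x)`, the diagonal
counting as the centroid `c_{k+1}`. By Fatou's lemma this is lower semicontinuous in `c`, so the
sublevel set is closed. It is also bounded: if `Pers_p` of `μ` outside the ball of radius `N` is
small enough and `‖c_j‖ > 2N`, then every `x` with `‖x‖ < N` is closer to the diagonal than to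
`c_j`; dropping `c_j` therefore changes the integrand only where `‖x‖ ≥ N`, and there it stays
below `‖x - ∂Ω‖^p`. This gives `(R_{k-1}^*)^p ≤ R_{k,p}(c)^p + ∫_{‖x‖ ≥ N} ‖x - ∂Ω‖^p dμ`,
which is impossible when `R_{k,p}(c) ≤ λ < R_{k-1}^*`.
-/

open Filter Topology

theorem lowerSemicontinuous_lintegral {X α : Type*} [TopologicalSpace X]
    [FirstCountableTopology X] [MeasurableSpace α] {μ : Measure α} {F : X → α → ℝ≥0∞}
    (hF_meas : ∀ c, Measurable (F c)) (hF : ∀ a, LowerSemicontinuous fun c => F c a) :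
    LowerSemicontinuous fun c => ∫⁻ a, F c a ∂μ :=
  lowerSemicontinuous_iff_le_liminf.2 fun c =>
    calc ∫⁻ a, F c a ∂μ ≤ ∫⁻ a, liminf (fun c' => F c' a) (𝓝 c) ∂μ :=
          lintegral_mono fun a => (hF a).le_liminf c
      _ ≤ liminf (fun c' => ∫⁻ a, F c' a ∂μ) (𝓝 c) := lintegral_liminf_le hF_meas

theorem tendsto_setLIntegral_le_norm_zero {E : Type*} [NormedAddCommGroup E]
    [MeasurableSpace E] [OpensMeasurableSpace E] {μ : Measure E} {f : E → ℝ≥0∞}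
    (hf : Measurable f) (hfμ : ∫⁻ x, f x ∂μ ≠ ∞) :
    Tendsto (fun N : ℕ => ∫⁻ x in {x | (N : ℝ) ≤ ‖x‖}, f x ∂μ) atTop (𝓝 0) := by
  have hmeas (N : ℕ) : MeasurableSet {x : E | (N : ℝ) ≤ ‖x‖} :=
    measurableSet_le measurable_const measurable_norm
  simp_rw [← lintegral_indicator (hmeas _)]
  rw [← lintegral_zero]
  refine tendsto_lintegral_of_dominated_convergence f (fun N => hf.indicator (hmeas N))
    (fun N => ae_of_all _ (indicator_le_self _ f)) hfμ (ae_of_all _ fun x => ?_)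
  refine tendsto_const_nhds.congr' ?_
  filter_upwards [tendsto_natCast_atTop_atTop.eventually_gt_atTop ‖x‖] with N hN
  exact (indicator_of_notMem (s := {x : E | (N : ℝ) ≤ ‖x‖}) (not_le.2 hN) f).symm

lemma isClosed_OmegaBar : IsClosed OmegaBar := by
  have : OmegaBar = {x : E2 | x 0 ≤ x 1} := by
    ext x; simp [OmegaBar, Omega, diagSet, le_iff_lt_or_eq]
  rw [this]
  exact isClosed_le (by fun_prop) (by fun_prop)

lemma isOpen_Omega : IsOpen Omega :=
  isOpen_lt (by fun_prop) (by fun_prop)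

lemma dDiag_le_norm (x : E2) : dDiag x ≤ ‖x‖ := by
  simpa [dDiag] using
    Metric.infDist_le_dist_of_mem (x := x) (show (0 : E2) ∈ diagSet by simp [diagSet])

lemma measurable_dDiag_rpow (p : ℝ) : Measurable fun x => ENNReal.ofReal (dDiag x ^ p) :=
  ((Metric.continuous_infDist_pt _).measurable.pow_const p).ennreal_ofReal

lemma continuous_cdistC (k : ℕ) (j : Fin (k + 1)) :
    Continuous fun q : (Fin k → E2) × E2 => cdistC k q.1 j q.2 := by
  unfold cdistC
  split
  · exact continuous_snd.dist ((continuous_apply _).comp continuous_fst)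
  · exact (Metric.continuous_infDist_pt _).comp continuous_snd

lemma cdistC_castSucc (k : ℕ) (c : Fin k → E2) (i : Fin k) (x : E2) :
    cdistC k c i.castSucc x = dist x (c i) := by
  simp [cdistC]

lemma cdistC_last (k : ℕ) (c : Fin k → E2) (x : E2) : cdistC k c (Fin.last k) x = dDiag x := by
  simp [cdistC]

lemma measurableSet_Vcell (k : ℕ) (c : Fin k → E2) (j : Fin (k + 1)) :
    MeasurableSet (Vcell k c j) := by
  have hd (i : Fin (k + 1)) : Measurable (cdistC k c i) :=
    ((continuous_cdistC k i).comp (Continuous.prodMk_right c)).measurable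
  have hle (i i' : Fin (k + 1)) : Measurable fun x => cdistC k c i x ≤ cdistC k c i' x :=
    measurableSet_setOfPred.1 (measurableSet_le (hd i) (hd i'))
  have hlt (i i' : Fin (k + 1)) : Measurable fun x => cdistC k c i x < cdistC k c i' x :=
    measurableSet_setOfPred.1 (measurableSet_lt (hd i) (hd i'))
  exact isOpen_Omega.measurableSet.inter (Measurable.setOf (by fun_prop))

lemma pairwise_disjoint_Vcell (k : ℕ) (c : Fin k → E2) :
    Pairwise (Function.onFun Disjoint (Vcell k c)) := by
  refine pairwise_disjoint_on (Vcell k c) |>.2 fun j j' h => disjoint_left.2 fun x hx hx' => ?_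
  exact (hx'.2.1 j h).not_gt (hx.2.2 j' h)

def minCodeDist (k : ℕ) (c : Fin k → E2) (x : E2) : ℝ :=
  Finset.univ.inf' Finset.univ_nonempty fun j : Fin (k + 1) => cdistC k c j x

section minCodeDist

variable {k : ℕ} {c : Fin k → E2} {x : E2}

lemma minCodeDist_le_cdistC (j : Fin (k + 1)) : minCodeDist k c x ≤ cdistC k c j x :=
  Finset.inf'_le _ (Finset.mem_univ _)

lemma minCodeDist_le_dist (i : Fin k) : minCodeDist k c x ≤ dist x (c i) :=
  cdistC_castSucc k c i x ▸ minCodeDist_le_cdistC i.castSucc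

lemma minCodeDist_le_dDiag : minCodeDist k c x ≤ dDiag x :=
  cdistC_last k c x ▸ minCodeDist_le_cdistC (Fin.last k)

lemma minCodeDist_nonneg : 0 ≤ minCodeDist k c x := by
  obtain ⟨j, -, hj⟩ := Finset.exists_mem_eq_inf' Finset.univ_nonempty
    fun j : Fin (k + 1) => cdistC k c j x
  rw [minCodeDist, hj]
  unfold cdistC
  split
  · exact dist_nonneg
  · exact Metric.infDist_nonneg

lemma minCodeDist_eq_dDiag_or_dist :
    minCodeDist k c x = dDiag x ∨ ∃ i, minCodeDist k c x = dist x (c i) := by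
  obtain ⟨j, -, hj⟩ := Finset.exists_mem_eq_inf' Finset.univ_nonempty
    fun j : Fin (k + 1) => cdistC k c j x
  rw [minCodeDist, hj]
  induction j using Fin.lastCases with
  | last => exact Or.inl (cdistC_last k c x)
  | cast i => exact Or.inr ⟨i, cdistC_castSucc k c i x⟩

variable (k) in
lemma continuous_minCodeDist : Continuous fun q : (Fin k → E2) × E2 => minCodeDist k q.1 q.2 :=
  Continuous.finset_inf'_apply _ fun j _ => continuous_cdistC k j

lemma cdistC_eq_minCodeDist_of_mem_Vcell {j : Fin (k + 1)} (hx : x ∈ Vcell k c j) :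
    cdistC k c j x = minCodeDist k c x := by
  refine le_antisymm (Finset.le_inf' _ _ fun j' _ => ?_) (minCodeDist_le_cdistC j)
  rcases lt_trichotomy j' j with h | rfl | h
  · exact hx.2.1 j' h
  · exact le_rfl
  · exact (hx.2.2 j' h).le

/-- A point of `Ω` lies in the cell of the last index `j` realising `minCodeDist`. -/
lemma iUnion_Vcell : ⋃ j, Vcell k c j = Omega := by
  refine Subset.antisymm (iUnion_subset fun j x hx => hx.1) fun x hx => ?_
  let F := Finset.univ.filter fun j => cdistC k c j x = minCodeDist k c x
  have hF : F.Nonempty := by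
    obtain ⟨j, -, hj⟩ := Finset.exists_mem_eq_inf' Finset.univ_nonempty
      fun j : Fin (k + 1) => cdistC k c j x
    exact ⟨j, Finset.mem_filter.2 ⟨Finset.mem_univ _, hj.symm⟩⟩
  have hmax : cdistC k c (F.max' hF) x = minCodeDist k c x :=
    (Finset.mem_filter.1 (F.max'_mem hF)).2
  refine mem_iUnion.2 ⟨F.max' hF, hx, fun j' _ => hmax ▸ minCodeDist_le_cdistC j',
    fun j' hj' => hmax ▸ (minCodeDist_le_cdistC j').lt_of_ne fun heq => ?_⟩
  exact (F.le_max' j' (Finset.mem_filter.2 ⟨Finset.mem_univ _, heq.symm⟩)).not_gt hj'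

end minCodeDist

def distortionPow (p : ℝ) (μ : Measure E2) (k : ℕ) (c : Fin k → E2) : ℝ≥0∞ :=
  ∫⁻ x in Omega, ENNReal.ofReal (minCodeDist k c x ^ p) ∂μ

section distortion

variable {p : ℝ} (μ : Measure E2) (k : ℕ)

lemma distortion_eq_distortionPow_rpow (c : Fin k → E2) :
    distortion p μ k c = distortionPow p μ k c ^ (1 / p) := by
  unfold distortion distortionPow
  congr 1
  calc ∑ j, ∫⁻ x in Vcell k c j, ENNReal.ofReal (cdistC k c j x ^ p) ∂μ
      = ∑ j, ∫⁻ x in Vcell k c j, ENNReal.ofReal (minCodeDist k c x ^ p) ∂μ :=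
        Finset.sum_congr rfl fun j _ => setLIntegral_congr_fun (measurableSet_Vcell k c j)
          fun x hx => by rw [cdistC_eq_minCodeDist_of_mem_Vcell hx]
    _ = ∫⁻ x in ⋃ j, Vcell k c j, ENNReal.ofReal (minCodeDist k c x ^ p) ∂μ := by
        rw [lintegral_iUnion (measurableSet_Vcell k c) (pairwise_disjoint_Vcell k c),
          tsum_fintype]
    _ = _ := by rw [iUnion_Vcell]

lemma distortion_rpow (hp : 0 < p) (c : Fin k → E2) :
    distortion p μ k c ^ p = distortionPow p μ k c := by
  rw [distortion_eq_distortionPow_rpow, ← ENNReal.rpow_mul, one_div_mul_cancel hp.ne',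
    ENNReal.rpow_one]

lemma lowerSemicontinuous_distortion (hp : 0 < p) :
    LowerSemicontinuous (distortion p μ k) := by
  have hcont : Continuous fun q : (Fin k → E2) × E2 => ENNReal.ofReal (minCodeDist k q.1 q.2 ^ p) :=
    ENNReal.continuous_ofReal.comp ((continuous_minCodeDist k).rpow_const fun _ => Or.inr hp.le)
  have hpow : LowerSemicontinuous (distortionPow p μ k) :=
    lowerSemicontinuous_lintegral (fun c => (hcont.comp (Continuous.prodMk_right c)).measurable)
      fun x => (hcont.comp (Continuous.prodMk_left x)).lowerSemicontinuous
  have hcomp := (ENNReal.continuous_rpow_const (y := 1 / p)).comp_lowerSemicontinuous hpow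
    (ENNReal.monotone_rpow_of_nonneg (one_div_nonneg.2 hp.le))
  simpa only [Function.comp_def, ← distortion_eq_distortionPow_rpow] using hcomp

lemma isClosed_sublevel_distortion (hp : 0 < p) (lam : ℝ≥0∞) :
    IsClosed {c : Fin k → E2 | (∀ j, c j ∈ OmegaBar) ∧ distortion p μ k c ≤ lam} := by
  have hbar : IsClosed {c : Fin k → E2 | ∀ j, c j ∈ OmegaBar} := by
    rw [ofPred_forall]
    exact isClosed_iInter fun j => isClosed_OmegaBar.preimage (continuous_apply j)
  exact hbar.inter ((lowerSemicontinuous_distortion μ k hp).isClosed_preimage lam)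

end distortion

lemma minCodeDist_succAbove_le {m : ℕ} {c : Fin (m + 1) → E2} {j₀ : Fin (m + 1)} {x : E2}
    (hx : dDiag x ≤ dist x (c j₀)) :
    minCodeDist m (fun i => c (j₀.succAbove i)) x ≤ minCodeDist (m + 1) c x := by
  rcases minCodeDist_eq_dDiag_or_dist (c := c) (x := x) with h | ⟨i, h⟩
  · exact h ▸ minCodeDist_le_dDiag
  · rw [h]
    by_cases hi : i = j₀
    · exact minCodeDist_le_dDiag.trans (hi ▸ hx)
    · obtain ⟨i', rfl⟩ := Fin.exists_succAbove_eq hi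
      exact minCodeDist_le_dist i'

/-- Points with `‖x‖ < R` are closer to the diagonal than to a centroid of norm `> 2R`, so
dropping that centroid only matters outside the ball of radius `R`. -/
lemma distortionPow_succAbove_le {p : ℝ} (hp : 0 ≤ p) (μ : Measure E2) {m : ℕ}
    {c : Fin (m + 1) → E2} {j₀ : Fin (m + 1)} {R : ℝ} (hfar : 2 * R < ‖c j₀‖) :
    distortionPow p μ m (fun i => c (j₀.succAbove i)) ≤ distortionPow p μ (m + 1) c +
      ∫⁻ x in {x | R ≤ ‖x‖}, ENNReal.ofReal (dDiag x ^ p) ∂μ.restrict Omega := by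
  have hR : MeasurableSet {x : E2 | R ≤ ‖x‖} := measurableSet_le measurable_const measurable_norm
  rw [distortionPow, distortionPow, ← lintegral_indicator hR,
    ← lintegral_add_right _ ((measurable_dDiag_rpow p).indicator hR)]
  refine lintegral_mono fun x => ?_
  by_cases hx : R ≤ ‖x‖
  · rw [indicator_of_mem (s := {x : E2 | R ≤ ‖x‖}) hx]
    exact le_add_left (ENNReal.ofReal_le_ofReal
      (Real.rpow_le_rpow minCodeDist_nonneg minCodeDist_le_dDiag hp))
  · rw [indicator_of_notMem (s := {x : E2 | R ≤ ‖x‖}) hx, add_zero]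
    refine ENNReal.ofReal_le_ofReal (Real.rpow_le_rpow minCodeDist_nonneg
      (minCodeDist_succAbove_le ?_) hp)
    have := dDiag_le_norm x
    have := norm_sub_norm_le (c j₀) x
    rw [dist_comm, dist_eq_norm]
    linarith

lemma norm_le_of_distortionPow_add_lt {p : ℝ} (hp : 0 < p) {μ : Measure E2} {m : ℕ}
    {c : Fin (m + 1) → E2} (hc : ∀ j, c j ∈ OmegaBar) {R : ℝ}
    (hlt : distortionPow p μ (m + 1) c +
      ∫⁻ x in {x | R ≤ ‖x‖}, ENNReal.ofReal (dDiag x ^ p) ∂μ.restrict Omega < Rstar p μ m ^ p)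
    (j₀ : Fin (m + 1)) : ‖c j₀‖ ≤ 2 * R := by
  by_contra! hfar
  refine hlt.not_ge ?_
  calc Rstar p μ m ^ p ≤ distortion p μ m (fun i => c (j₀.succAbove i)) ^ p :=
        ENNReal.rpow_le_rpow (iInf₂_le _ fun i => hc _) hp.le
    _ = distortionPow p μ m (fun i => c (j₀.succAbove i)) := distortion_rpow μ m hp _
    _ ≤ _ := distortionPow_succAbove_le hp.le μ hfar

theorem statement9_general (p : ℝ) (hp : 1 ≤ p) (k : ℕ) (hk : 1 ≤ k) (μ : Measure E2)
    (hμp : Pers p μ < ⊤)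
    (lam : ℝ≥0∞) (hlam : lam < Rstar p μ (k - 1)) :
    IsCompact {c : Fin k → E2 | (∀ j, c j ∈ OmegaBar) ∧ distortion p μ k c ≤ lam} := by
  obtain ⟨m, rfl⟩ : ∃ m, k = m + 1 := ⟨k - 1, by omega⟩
  have hp0 : 0 < p := by linarith
  rw [Nat.add_sub_cancel] at hlam
  have htail := (tendsto_setLIntegral_le_norm_zero (measurable_dDiag_rpow p) hμp.ne).const_add
    (lam ^ p)
  rw [add_zero] at htail
  obtain ⟨N, hN⟩ := (htail.eventually_lt_const (ENNReal.rpow_lt_rpow hlam hp0)).exists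
  refine (isCompact_closedBall (0 : Fin (m + 1) → E2) (2 * N)).of_isClosed_subset
    (isClosed_sublevel_distortion μ (m + 1) hp0 lam) ?_
  rintro c ⟨hc, hcl⟩
  refine mem_closedBall_zero_iff.2 ((pi_norm_le_iff_of_nonneg (by positivity)).2
    (norm_le_of_distortionPow_add_lt hp0 hc (lt_of_le_of_lt ?_ hN)))
  gcongr
  rw [← distortion_rpow μ _ hp0]
  exact ENNReal.rpow_le_rpow hcl hp0.le

/-- Lemma: compactness of sublevel sets of the distortion.
For every `0 ≤ λ < R_{k-1}^*` (with the convention `R_0^* = Pers_p(μ)^{1/p}`, which is the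
value of `Rstar` for the empty codebook), the sublevel set `{c ∈ Ω̄^k : R_{k,p}(c) ≤ λ}` is
compact. -/
theorem statement9 (p : ℝ) (hp : 1 ≤ p) (k : ℕ) (hk : 1 ≤ k) (μ : Measure E2)
    (hμΩ : μ Omegaᶜ = 0) (hμp : Pers p μ < ⊤)
    (lam : ℝ≥0∞) (hlam : lam < Rstar p μ (k - 1)) :
    IsCompact {c : Fin k → E2 | (∀ j, c j ∈ OmegaBar) ∧ distortion p μ k c ≤ lam} :=
  statement9_general p hp k hk μ hμp lam hlam

end
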